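/- For every tuple σ = (Σ_{ρ_0},…,Σ_{ρ_{T−1}}) ∈ M_T and every k = 0,…,T−1, the alternating-optimization update map satisfies the identity 𝒯(σ)_k − Σ_{ρ_k} = Σ_{ρ_k} L_k ( E_k Σ_{x_k} E_kᵀ − Σ_{ρ_k} − Σ_{Q_k} ) L_k Σ_{ρ_k}, where E_k = (1/ε) Σ_{Q_k} B_kᵀ Π_{k+1} A_k and L_k = (Σ_{Q_k} + Σ_{ρ_k})^{−1}. -/

import Mathlib

open Matrix Filter Topology

/-- The unique symmetric positive semidefinite square root of a positive
semidefinite real matrix (junk value `0` if the matrix is not PSD). -/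
noncomputable def msqrt {d : ℕ} (X : Matrix (Fin d) (Fin d) ℝ) :
    Matrix (Fin d) (Fin d) ℝ :=
  letI := Classical.propDecidable X.PosSemidef
  if h : X.PosSemidef then
    (h.1.eigenvectorUnitary : Matrix (Fin d) (Fin d) ℝ) *
      diagonal ((↑) ∘ Real.sqrt ∘ h.1.eigenvalues) *
      (star h.1.eigenvectorUnitary : Matrix (Fin d) (Fin d) ℝ)
  else 0

/-- The Frobenius norm of a real square matrix. -/
noncomputable def frob {d : ℕ} (X : Matrix (Fin d) (Fin d) ℝ) : ℝ :=
  Real.sqrt (∑ i, ∑ j, X i j ^ 2)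

/-- Data of the mutual information optimal control problem for a discrete-time
linear system `x_{k+1} = A_k x_k + B_k u_k + w_k`. -/
structure LQData (n m : ℕ) where
  ε : ℝ
  A : ℕ → Matrix (Fin n) (Fin n) ℝ
  B : ℕ → Matrix (Fin n) (Fin m) ℝ
  R : ℕ → Matrix (Fin m) (Fin m) ℝ
  F : Matrix (Fin n) (Fin n) ℝ
  Sw : ℕ → Matrix (Fin n) (Fin n) ℝ
  Sini : Matrix (Fin n) (Fin n) ℝ

namespace LQData

variable {n m : ℕ} (P : LQData n m) (T : ℕ) (Srho : ℕ → Matrix (Fin m) (Fin m) ℝ)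

/-- The backward Riccati recursion `Π_k` associated with the prior covariances
`Σ_{ρ_k}`: `Π_T = F` and
`Π_k = A_kᵀ Π_{k+1} A_k − (1/ε) A_kᵀ Π_{k+1} B_k Σ^{1/2} (I + Σ^{1/2} C_k Σ^{1/2})⁻¹ Σ^{1/2} B_kᵀ Π_{k+1} A_k`
with `C_k = (R_k + B_kᵀ Π_{k+1} B_k)/ε`. -/
noncomputable def Ric (k : ℕ) : Matrix (Fin n) (Fin n) ℝ :=
  if h : T ≤ k then P.F
  else
    let Pk := Ric (k + 1)
    let S := msqrt (Srho k)
    let C := (1 / P.ε) • (P.R k + (P.B k)ᵀ * Pk * P.B k)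
    (P.A k)ᵀ * Pk * P.A k -
      (1 / P.ε) • ((P.A k)ᵀ * Pk * P.B k * S * (1 + S * C * S)⁻¹ * S * (P.B k)ᵀ * Pk * P.A k)
termination_by T - k
decreasing_by omega

/-- `C_k = (R_k + B_kᵀ Π_{k+1} B_k)/ε`. -/
noncomputable def Ck (k : ℕ) : Matrix (Fin m) (Fin m) ℝ :=
  (1 / P.ε) • (P.R k + (P.B k)ᵀ * P.Ric T Srho (k + 1) * P.B k)

/-- `Σ_{Q_k} = ε (R_k + B_kᵀ Π_{k+1} B_k)⁻¹`. -/
noncomputable def SigQ (k : ℕ) : Matrix (Fin m) (Fin m) ℝ :=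
  P.ε • (P.R k + (P.B k)ᵀ * P.Ric T Srho (k + 1) * P.B k)⁻¹

/-- Covariance `Σ_{π_k}` of the optimal policy for the fixed prior. -/
noncomputable def SigPi (k : ℕ) : Matrix (Fin m) (Fin m) ℝ :=
  msqrt (Srho k) * (1 + msqrt (Srho k) * P.Ck T Srho k * msqrt (Srho k))⁻¹ * msqrt (Srho k)

/-- Feedback gain `P_k = −(1/ε) Σ_{π_k} B_kᵀ Π_{k+1} A_k`. -/
noncomputable def Pgain (k : ℕ) : Matrix (Fin m) (Fin n) ℝ :=
  -((1 / P.ε) • (P.SigPi T Srho k * (P.B k)ᵀ * P.Ric T Srho (k + 1) * P.A k))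

/-- Forward state covariance recursion under the optimal policy. -/
noncomputable def Sigx : ℕ → Matrix (Fin n) (Fin n) ℝ
  | 0 => P.Sini
  | k + 1 =>
    (P.A k + P.B k * P.Pgain T Srho k) * Sigx k *
        (P.A k + P.B k * P.Pgain T Srho k)ᵀ +
      P.B k * P.SigPi T Srho k * (P.B k)ᵀ + P.Sw k

/-- The standard LQR Riccati recursion `Π̌_k`. -/
noncomputable def RicLQR (k : ℕ) : Matrix (Fin n) (Fin n) ℝ :=
  if h : T ≤ k then P.F
  else
    let Pk := RicLQR (k + 1)
    (P.A k)ᵀ * Pk * P.A k -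
      (P.A k)ᵀ * Pk * P.B k * (P.R k + (P.B k)ᵀ * Pk * P.B k)⁻¹ * (P.B k)ᵀ * Pk * P.A k
termination_by T - k
decreasing_by omega

/-- `Π̂_k = A_kᵀ ⋯ A_{T−1}ᵀ F A_{T−1} ⋯ A_k`. -/
noncomputable def RicHat (k : ℕ) : Matrix (Fin n) (Fin n) ℝ :=
  if h : T ≤ k then P.F
  else (P.A k)ᵀ * RicHat (k + 1) * P.A k
termination_by T - k
decreasing_by omega

/-- `Σ_{w_{k−1}}` with the convention `Σ_{w_{−1}} := Σ_{x_ini}`. -/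
noncomputable def Swm1 (k : ℕ) : Matrix (Fin n) (Fin n) ℝ :=
  if k = 0 then P.Sini else P.Sw (k - 1)

/-- The matrix `M̌_k` from the sufficient condition for stochastic optimal policies. -/
noncomputable def Mcheck (k : ℕ) : Matrix (Fin m) (Fin m) ℝ :=
  (P.R k + (P.B k)ᵀ * P.RicHat T (k + 1) * P.B k)⁻¹ *
      ((P.B k)ᵀ * P.RicLQR T (k + 1) * P.A k * P.Swm1 k * (P.A k)ᵀ *
        P.RicLQR T (k + 1) * P.B k) *
      (P.R k + (P.B k)ᵀ * P.RicHat T (k + 1) * P.B k)⁻¹ -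
    P.ε • (P.R k + (P.B k)ᵀ * P.RicLQR T (k + 1) * P.B k)⁻¹

/-- State covariance under the zero control input. -/
noncomputable def SigxZero : ℕ → Matrix (Fin n) (Fin n) ℝ
  | 0 => P.Sini
  | k + 1 => P.A k * SigxZero k * (P.A k)ᵀ + P.Sw k

/-- The matrix `M̂_k^zero` from the sufficient condition for deterministic optimal policies. -/
noncomputable def MhatZero (k : ℕ) : Matrix (Fin m) (Fin m) ℝ :=
  (P.R k + (P.B k)ᵀ * P.RicLQR T (k + 1) * P.B k)⁻¹ *
      ((P.B k)ᵀ * P.RicHat T (k + 1) * P.A k * P.SigxZero k * (P.A k)ᵀ *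
        P.RicHat T (k + 1) * P.B k) *
      (P.R k + (P.B k)ᵀ * P.RicLQR T (k + 1) * P.B k)⁻¹ -
    P.ε • (P.R k + (P.B k)ᵀ * P.RicHat T (k + 1) * P.B k)⁻¹


/-- The backward recursion `r_k` for the mean offset:
`r_T = 0` and `r_k = A_k⁻¹ r_{k+1} − Π_k⁻¹ A_kᵀ Π_{k+1} B_k (I + Σ_{ρ_k} C_k)⁻¹ μ_{ρ_k}`. -/
noncomputable def rvec (μ : ℕ → Fin m → ℝ) (k : ℕ) : Fin n → ℝ :=
  if h : T ≤ k then 0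
  else
    ((P.A k)⁻¹).mulVec (rvec μ (k + 1)) -
      ((P.Ric T Srho k)⁻¹ * ((P.A k)ᵀ * P.Ric T Srho (k + 1) * P.B k *
        (1 + Srho k * P.Ck T Srho k)⁻¹)).mulVec (μ k)
termination_by T - k
decreasing_by omega

/-- `Θ_k = ε C_k − ε C_k Σ_{π_k} C_k − (I − C_k Σ_{π_k}) B_kᵀ Π_{k+1} A_k Π_k⁻¹ A_kᵀ Π_{k+1} B_k (I − Σ_{π_k} C_k)`. -/
noncomputable def Theta (k : ℕ) : Matrix (Fin m) (Fin m) ℝ :=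
  P.ε • P.Ck T Srho k - P.ε • (P.Ck T Srho k * P.SigPi T Srho k * P.Ck T Srho k) -
    (1 - P.Ck T Srho k * P.SigPi T Srho k) *
      ((P.B k)ᵀ * P.Ric T Srho (k + 1) * P.A k * (P.Ric T Srho k)⁻¹ *
        ((P.A k)ᵀ * P.Ric T Srho (k + 1) * P.B k)) *
      (1 - P.SigPi T Srho k * P.Ck T Srho k)

end LQData

/-- Extend a `T`-tuple of matrices to a function on `ℕ` (by zero). -/
def extT {m : ℕ} (T : ℕ) (σ : Fin T → Matrix (Fin m) (Fin m) ℝ) :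
    ℕ → Matrix (Fin m) (Fin m) ℝ :=
  fun k => if h : k < T then σ ⟨k, h⟩ else 0


/-- Extend a `T`-tuple of vectors to a function on `ℕ` (by zero). -/
def extV {m : ℕ} (T : ℕ) (μ : Fin T → Fin m → ℝ) : ℕ → Fin m → ℝ :=
  fun k => if h : k < T then μ ⟨k, h⟩ else 0

namespace LQData

variable {n m : ℕ} (P : LQData n m) (T : ℕ)

/-- The reduced objective `J̌` as a function of the `T`-tuple of prior covariances. -/
noncomputable def Jcheck (σ : Fin T → Matrix (Fin m) (Fin m) ℝ) : ℝ :=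
  (1 / 2) * ((P.Ric T (extT T σ) 0 * P.Sini).trace +
    ∑ k : Fin T,
      (P.ε * Real.log ((extT T σ k + P.SigQ T (extT T σ) k).det / (P.SigQ T (extT T σ) k).det) +
        (P.Ric T (extT T σ) (k + 1) * P.Sw k).trace))

/-- `L_k = (Σ_{Q_k} + Σ_{ρ_k})⁻¹`. -/
noncomputable def Lmat (Srho : ℕ → Matrix (Fin m) (Fin m) ℝ) (k : ℕ) :
    Matrix (Fin m) (Fin m) ℝ :=
  (P.SigQ T Srho k + Srho k)⁻¹

/-- `E_k = (1/ε) Σ_{Q_k} B_kᵀ Π_{k+1} A_k`. -/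
noncomputable def Emat (Srho : ℕ → Matrix (Fin m) (Fin m) ℝ) (k : ℕ) :
    Matrix (Fin m) (Fin n) ℝ :=
  (1 / P.ε) • (P.SigQ T Srho k * (P.B k)ᵀ * P.Ric T Srho (k + 1) * P.A k)

/-- `J̌'_k = (ε/2) L_k (Σ_{ρ_k} + Σ_{Q_k} − E_k Σ_{x_k} E_kᵀ) L_k`. -/
noncomputable def Jprime (Srho : ℕ → Matrix (Fin m) (Fin m) ℝ) (k : ℕ) :
    Matrix (Fin m) (Fin m) ℝ :=
  (P.ε / 2) • (P.Lmat T Srho k *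
    (Srho k + P.SigQ T Srho k - P.Emat T Srho k * P.Sigx T Srho k * (P.Emat T Srho k)ᵀ) *
    P.Lmat T Srho k)

/-- The alternating-optimization update map `𝒯` on `T`-tuples of prior covariances:
`𝒯(σ)_k = Σ_{π_k} + P_k Σ_{x_k} P_kᵀ`. -/
noncomputable def Tmap (σ : Fin T → Matrix (Fin m) (Fin m) ℝ) :
    Fin T → Matrix (Fin m) (Fin m) ℝ :=
  fun k =>
    P.SigPi T (extT T σ) k +
      P.Pgain T (extT T σ) k * P.Sigx T (extT T σ) k * (P.Pgain T (extT T σ) k)ᵀ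

/-- The objective `J` as a function of the prior means, for fixed prior covariances:
`J(μ) = (1/2)( r_0ᵀ Π_0 r_0 + Σ_k μ_{ρ_k}ᵀ Θ_k μ_{ρ_k} )`. -/
noncomputable def Jmean (Srho : ℕ → Matrix (Fin m) (Fin m) ℝ) (μ : Fin T → Fin m → ℝ) : ℝ :=
  (1 / 2) *
    (P.rvec T Srho (extV T μ) 0 ⬝ᵥ (P.Ric T Srho 0).mulVec (P.rvec T Srho (extV T μ) 0) +
      ∑ k : Fin T, μ k ⬝ᵥ (P.Theta T Srho k).mulVec (μ k))

end LQData

open Matrix Filter Topology LQData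


/-!
With `Σ_Q = C⁻¹` and `L = (Σ_Q + Σ_ρ)⁻¹`, the push-through identity
`S (I + S C S)⁻¹ S = Σ_ρ L Σ_Q` (for `S = Σ_ρ^{1/2}`) rewrites `Σ_π` as `Σ_ρ − Σ_ρ L Σ_ρ` and the
gain `P_k` as `−Σ_ρ L E_k`, after which the identity is a rearrangement. The one analytic input
is that every `Π_k` is positive semidefinite, which makes `R_k + B_kᵀ Π_{k+1} B_k` and
`Σ_Q + Σ_ρ` invertible. It propagates backwards because, with `N = Π^{1/2} B S` and
`M = ε (I + S C S) ⪰ Nᵀ N`, the Riccati step equals `Aᵀ Π^{1/2} (I − N M⁻¹ Nᵀ) Π^{1/2} A`, and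
`I − N M⁻¹ Nᵀ ⪰ 0` is a Schur complement statement.
-/

namespace Matrix

variable {ι κ : Type*}

theorem PosSemidef.transpose_eq {R : Type*} [Ring R] [PartialOrder R] [StarRing R]
    [TrivialStar R] {A : Matrix ι ι R} (hA : A.PosSemidef) : Aᵀ = A :=
  (isHermitian_iff_isSymm.mp hA.isHermitian).eq

theorem PosSemidef.transpose_mul_mul_same [Fintype ι] [Fintype κ] {R : Type*} [CommRing R]
    [PartialOrder R] [StarRing R] [StarOrderedRing R] [TrivialStar R] {A : Matrix ι ι R}
    (hA : A.PosSemidef) (B : Matrix ι κ R) : (Bᵀ * A * B).PosSemidef := by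
  simpa only [conjTranspose_eq_transpose_of_trivial] using hA.conjTranspose_mul_mul_same B

theorem posSemidef_one_sub_mul_inv_mul_conjTranspose [Fintype ι] [DecidableEq ι] [Fintype κ]
    [DecidableEq κ] {R : Type*} [Field R] [PartialOrder R] [StarRing R] [StarOrderedRing R]
    {M : Matrix ι ι R} {N : Matrix κ ι R} (hM : M.PosDef) (hMN : (M - Nᴴ * N).PosSemidef) :
    (1 - N * M⁻¹ * Nᴴ).PosSemidef := by
  have := hM.isUnit.invertible
  have : Invertible (1 : Matrix κ κ R) := invertibleOne
  have hblock := (PosDef.fromBlocks₂₂ M Nᴴ (PosDef.one (n := κ))).mpr (by simpa using hMN)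
  simpa using (PosDef.fromBlocks₁₁ Nᴴ 1 hM).mp hblock

theorem mul_inv_one_add_mul_mul_mul_eq [Fintype ι] [DecidableEq ι] {R : Type*} [CommRing R]
    {S C Q : Matrix ι ι R} (hCQ : C * Q = 1) (hM : IsUnit (1 + S * C * S).det)
    (hW : IsUnit (Q + S * S).det) :
    S * (1 + S * C * S)⁻¹ * S = S * S * (Q + S * S)⁻¹ * Q := by
  have hSW : (1 + S * C * S) * S = S * C * (Q + S * S) := by
    calc (1 + S * C * S) * S = S * 1 + S * C * S * S := by noncomm_ring
      _ = S * C * (Q + S * S) := by rw [← hCQ]; noncomm_ring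
  have hmul : (1 + S * C * S) * (S * (Q + S * S)⁻¹ * Q) = S := by
    rw [← Matrix.mul_assoc, ← Matrix.mul_assoc, hSW, Matrix.mul_assoc (S * C),
      mul_nonsing_inv _ hW, Matrix.mul_one, Matrix.mul_assoc, hCQ, Matrix.mul_one]
  have hpush : (1 + S * C * S)⁻¹ * S = S * (Q + S * S)⁻¹ * Q :=
    calc (1 + S * C * S)⁻¹ * S
        = (1 + S * C * S)⁻¹ * ((1 + S * C * S) * (S * (Q + S * S)⁻¹ * Q)) := by rw [hmul]
      _ = S * (Q + S * S)⁻¹ * Q := nonsing_inv_mul_cancel_left _ _ hM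
  rw [Matrix.mul_assoc S, hpush]
  simp only [Matrix.mul_assoc]

end Matrix

section SquareRoot

variable {d : ℕ}

theorem msqrt_posSemidef {X : Matrix (Fin d) (Fin d) ℝ} (hX : X.PosSemidef) :
    (msqrt X).PosSemidef := by
  rw [msqrt, dif_pos hX, star_eq_conjTranspose]
  refine PosSemidef.mul_mul_conjTranspose_same (PosSemidef.diagonal fun i => ?_) _
  simp [Real.sqrt_nonneg]

theorem msqrt_transpose (X : Matrix (Fin d) (Fin d) ℝ) : (msqrt X)ᵀ = msqrt X := by
  by_cases hX : X.PosSemidef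
  · exact (msqrt_posSemidef hX).transpose_eq
  · rw [msqrt, dif_neg hX, transpose_zero]

theorem msqrt_mul_self {X : Matrix (Fin d) (Fin d) ℝ} (hX : X.PosSemidef) :
    msqrt X * msqrt X = X := by
  rw [msqrt, dif_pos hX]
  conv_rhs => rw [hX.1.spectral_theorem, Unitary.conjStarAlgAut_apply]
  simp only [Matrix.mul_assoc]
  rw [← Matrix.mul_assoc (star _) _ (_ * _), Unitary.coe_star_mul_self, Matrix.one_mul,
    ← Matrix.mul_assoc (diagonal _), diagonal_mul_diagonal]
  congr 3
  funext i
  simp [Real.mul_self_sqrt (hX.eigenvalues_nonneg i)]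

end SquareRoot

theorem posSemidef_riccatiStep {n : ℕ} {ι κ : Type*} [Fintype ι] [DecidableEq ι] [Fintype κ]
    {ε : ℝ} (hε : 0 < ε) {K : Matrix (Fin n) (Fin n) ℝ} (hK : K.PosSemidef)
    {R : Matrix ι ι ℝ} (hR : R.PosSemidef) (A : Matrix (Fin n) κ ℝ) (B : Matrix (Fin n) ι ℝ)
    {S : Matrix ι ι ℝ} (hS : Sᵀ = S) :
    (Aᵀ * K * A - (1 / ε) • (Aᵀ * K * B * S * (1 + S * ((1 / ε) • (R + Bᵀ * K * B)) * S)⁻¹ *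
      S * Bᵀ * K * A)).PosSemidef := by
  set M := 1 + S * ((1 / ε) • (R + Bᵀ * K * B)) * S with hMdef
  set Q := msqrt K
  set N := Q * B * S with hN
  have hQQ : Q * Q = K := msqrt_mul_self hK
  have hQT : Qᵀ = Q := msqrt_transpose K
  have hNT : Nᵀ = S * Bᵀ * Q := by simp only [N, transpose_mul, hS, hQT, Matrix.mul_assoc]
  have hM : M.PosDef := by
    refine PosDef.one.add_posSemidef ?_
    simpa only [hS] using
      ((hR.add (hK.transpose_mul_mul_same B)).smul (one_div_pos.mpr hε).le).transpose_mul_mul_same S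
  have hMN : (ε • M - Nᵀ * N).PosSemidef := by
    have : ε • M - Nᵀ * N = ε • 1 + Sᵀ * R * S := by
      rw [hMdef, hNT, hS, ← hQQ, smul_add, Matrix.mul_smul, Matrix.smul_mul, smul_smul,
        mul_one_div_cancel hε.ne', one_smul, hN]
      simp only [Matrix.mul_add, Matrix.add_mul, Matrix.mul_assoc]
      abel
    rw [this]
    exact (PosSemidef.one.smul hε.le).add (hR.transpose_mul_mul_same S)
  have hSchur : (1 - N * (ε • M)⁻¹ * Nᵀ).PosSemidef := by
    simpa only [conjTranspose_eq_transpose_of_trivial] using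
      posSemidef_one_sub_mul_inv_mul_conjTranspose (hM.smul hε)
        (by simpa only [conjTranspose_eq_transpose_of_trivial] using hMN)
  have hinv : (ε • M)⁻¹ = (1 / ε) • M⁻¹ := by
    refine inv_eq_left_inv ?_
    rw [Matrix.smul_mul, Matrix.mul_smul, smul_smul, one_div_mul_cancel hε.ne', one_smul,
      nonsing_inv_mul _ ((isUnit_iff_isUnit_det M).mp hM.isUnit)]
  have hfactor : Aᵀ * K * A - (1 / ε) • (Aᵀ * K * B * S * M⁻¹ * S * Bᵀ * K * A) =
      Aᵀ * (Qᵀ * (1 - N * (ε • M)⁻¹ * Nᵀ) * Q) * A := by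
    rw [hinv, hNT, hQT, ← hQQ]
    simp only [N, Matrix.mul_sub, Matrix.sub_mul, Matrix.mul_one, Matrix.mul_smul,
      Matrix.smul_mul, Matrix.mul_assoc]
  rw [hfactor]
  exact (hSchur.transpose_mul_mul_same Q).transpose_mul_mul_same A

namespace LQData

variable {n m : ℕ} (P : LQData n m) (T : ℕ) (Srho : ℕ → Matrix (Fin m) (Fin m) ℝ)

theorem Ric_posSemidef (hε : 0 < P.ε) (hR : ∀ k < T, (P.R k).PosSemidef)
    (hF : P.F.PosSemidef) (k : ℕ) : (P.Ric T Srho k).PosSemidef := by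
  rw [Ric]
  split_ifs with hk
  · exact hF
  · exact posSemidef_riccatiStep hε (Ric_posSemidef hε hR hF (k + 1)) (hR k (by omega)) _ _
      (msqrt_transpose _)
termination_by T - k

variable {P T Srho} {k : ℕ}

theorem Ck_mul_SigQ (hε : P.ε ≠ 0)
    (hG : IsUnit (P.R k + (P.B k)ᵀ * P.Ric T Srho (k + 1) * P.B k).det) :
    P.Ck T Srho k * P.SigQ T Srho k = 1 := by
  rw [Ck, SigQ, Matrix.smul_mul, Matrix.mul_smul, smul_smul, one_div_mul_cancel hε, one_smul,
    mul_nonsing_inv _ hG]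

theorem SigQ_posDef (hε : 0 < P.ε)
    (hG : (P.R k + (P.B k)ᵀ * P.Ric T Srho (k + 1) * P.B k).PosDef) :
    (P.SigQ T Srho k).PosDef :=
  hG.inv.smul hε

theorem Lmat_posDef (hε : 0 < P.ε)
    (hG : (P.R k + (P.B k)ᵀ * P.Ric T Srho (k + 1) * P.B k).PosDef)
    (hS : (Srho k).PosSemidef) : (P.Lmat T Srho k).PosDef :=
  ((SigQ_posDef hε hG).add_posSemidef hS).inv

theorem SigPi_eq (hε : 0 < P.ε)
    (hG : (P.R k + (P.B k)ᵀ * P.Ric T Srho (k + 1) * P.B k).PosDef)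
    (hS : (Srho k).PosSemidef) :
    P.SigPi T Srho k = Srho k * P.Lmat T Srho k * P.SigQ T Srho k := by
  set S := msqrt (Srho k)
  have hC : (P.Ck T Srho k).PosSemidef := hG.posSemidef.smul (one_div_pos.mpr hε).le
  have hM : (1 + S * P.Ck T Srho k * S).PosDef := PosDef.one.add_posSemidef
    (by simpa only [S, msqrt_transpose] using hC.transpose_mul_mul_same S)
  have hW : (P.SigQ T Srho k + S * S).PosDef := by
    rw [msqrt_mul_self hS]
    exact (SigQ_posDef hε hG).add_posSemidef hS
  rw [SigPi, mul_inv_one_add_mul_mul_mul_eq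
    (Ck_mul_SigQ hε.ne' ((isUnit_iff_isUnit_det _).mp hG.isUnit))
    ((isUnit_iff_isUnit_det _).mp hM.isUnit) ((isUnit_iff_isUnit_det _).mp hW.isUnit),
    msqrt_mul_self hS, Lmat]

theorem Pgain_eq (hε : 0 < P.ε)
    (hG : (P.R k + (P.B k)ᵀ * P.Ric T Srho (k + 1) * P.B k).PosDef)
    (hS : (Srho k).PosSemidef) :
    P.Pgain T Srho k = -(Srho k * P.Lmat T Srho k * P.Emat T Srho k) := by
  rw [Pgain, SigPi_eq hε hG hS, Emat]
  simp only [Matrix.mul_smul, Matrix.mul_assoc]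

theorem SigPi_add_conj_Pgain_sub_eq (hε : 0 < P.ε)
    (hG : (P.R k + (P.B k)ᵀ * P.Ric T Srho (k + 1) * P.B k).PosDef)
    (hS : (Srho k).PosSemidef) :
    P.SigPi T Srho k + P.Pgain T Srho k * P.Sigx T Srho k * (P.Pgain T Srho k)ᵀ - Srho k =
      Srho k * P.Lmat T Srho k *
        (P.Emat T Srho k * P.Sigx T Srho k * (P.Emat T Srho k)ᵀ - Srho k - P.SigQ T Srho k) *
        P.Lmat T Srho k * Srho k := by
  have hLW : P.Lmat T Srho k * (P.SigQ T Srho k + Srho k) = 1 :=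
    nonsing_inv_mul _ ((isUnit_iff_isUnit_det _).mp
      ((SigQ_posDef hε hG).add_posSemidef hS).isUnit)
  have hLT := (Lmat_posDef hε hG hS).posSemidef.transpose_eq
  rw [SigPi_eq hε hG hS, Pgain_eq hε hG hS]
  set σ := Srho k
  set L := P.Lmat T Srho k
  set Q := P.SigQ T Srho k
  set E := P.Emat T Srho k
  set X := P.Sigx T Srho k
  have hσLW : σ * L * (Q + σ) = σ := by rw [Matrix.mul_assoc, hLW, Matrix.mul_one]
  have hσLQ : σ * L * Q = σ - σ * L * σ := by
    rw [eq_sub_iff_add_eq, ← Matrix.mul_add, hσLW]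
  have hexpand : σ * L * (E * X * Eᵀ - σ - Q) * L * σ =
      σ * L * (E * X * Eᵀ) * L * σ - σ * L * (Q + σ) * L * σ := by noncomm_ring
  rw [hσLQ, transpose_neg, transpose_mul, transpose_mul, hLT, hS.transpose_eq, hexpand, hσLW]
  simp only [Matrix.neg_mul, Matrix.mul_neg, neg_neg, Matrix.mul_assoc]
  abel

end LQData

theorem tmap_update_identity_general {n m : ℕ} (T : ℕ) (P : LQData n m) (hε : 0 < P.ε)
    (hR : ∀ k < T, (P.R k).PosDef) (hF : P.F.PosDef)
    (σ : Fin T → Matrix (Fin m) (Fin m) ℝ) (hσ : ∀ k, (σ k).PosSemidef) :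
    ∀ k : Fin T,
      P.Tmap T σ k - σ k =
        σ k * P.Lmat T (extT T σ) k *
          (P.Emat T (extT T σ) k * P.Sigx T (extT T σ) k * (P.Emat T (extT T σ) k)ᵀ -
            σ k - P.SigQ T (extT T σ) k) *
          P.Lmat T (extT T σ) k * σ k := by
  intro k
  have hσk : extT T σ k = σ k := dif_pos k.2
  have hRic := P.Ric_posSemidef T (extT T σ) hε (fun j hj ↦ (hR j hj).posSemidef) hF.posSemidef
  have hG := (hR k k.2).add_posSemidef ((hRic (k + 1)).transpose_mul_mul_same (P.B k))
  rw [← hσk]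
  exact SigPi_add_conj_Pgain_sub_eq hε hG (hσk ▸ hσ k)

theorem tmap_update_identity {n m : ℕ} (hn : 1 ≤ n) (hm : 1 ≤ m) (T : ℕ) (hT : 1 ≤ T)
    (P : LQData n m) (hε : 0 < P.ε)
    (hR : ∀ k < T, (P.R k).PosDef) (hSw : ∀ k < T, (P.Sw k).PosDef)
    (hF : P.F.PosDef) (hSini : P.Sini.PosDef)
    (σ : Fin T → Matrix (Fin m) (Fin m) ℝ) (hσ : ∀ k, (σ k).PosSemidef) :
    ∀ k : Fin T,
      P.Tmap T σ k - σ k =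
        σ k * P.Lmat T (extT T σ) k *
          (P.Emat T (extT T σ) k * P.Sigx T (extT T σ) k * (P.Emat T (extT T σ) k)ᵀ -
            σ k - P.SigQ T (extT T σ) k) *
          P.Lmat T (extT T σ) k * σ k :=
  tmap_update_identity_general T P hε hR hF σ hσ
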